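/- Let G = (V, E) be a finite digraph, s, t ∈ V with s ≠ t, and let F ⊆ E be a set of arcs such that every vertex v ∈ V \ {s, t} has equally many incoming and outgoing arcs in F, s has no incoming arcs in F, and t has no outgoing arcs in F. Let k be the number of arcs of F leaving s. Then there exists a set of k pairwise edge-disjoint directed paths from s to t all of whose arcs belong to F. -/

import Mathlib

/-- The list of arcs traversed by a path given as a list of vertices. -/
def pathArcs {V : Type*} (p : List V) : List (V × V) := p.zip p.tail

/-- `p` is a directed path from `s` to `t` in the digraph with arc set `E`:
a nonempty list of pairwise distinct vertices, starting at `s`, ending at `t`,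
with consecutive vertices joined by arcs of `E`. -/
def IsPath {V : Type*} (E : Finset (V × V)) (s t : V) (p : List V) : Prop :=
  p.Nodup ∧ p.Chain' (fun u v => (u, v) ∈ E) ∧ p.head? = some s ∧ p.getLast? = some t

/-- Two paths are edge-disjoint if they share no arc. -/
def EdgeDisjoint {V : Type*} (p q : List V) : Prop :=
  ∀ a : V × V, a ∈ pathArcs p → a ∉ pathArcs q

/-- Two `s`–`t` paths are internally node-disjoint if the only vertices they share
are `s` and `t`. -/
def IntDisjoint {V : Type*} (s t : V) (p q : List V) : Prop :=
  ∀ v : V, v ∈ p → v ∈ q → v = s ∨ v = t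

/-- `P` is a set of pairwise edge-disjoint directed paths from `s` to `t`. -/
def IsEdgeDisjointFamily {V : Type*} (E : Finset (V × V)) (s t : V)
    (P : Finset (List V)) : Prop :=
  (∀ p ∈ P, IsPath E s t p) ∧ (P : Set (List V)).Pairwise EdgeDisjoint

/-- `P` is a set of pairwise internally node-disjoint directed paths from `s` to `t`. -/
def IsNodeDisjointFamily {V : Type*} (E : Finset (V × V)) (s t : V)
    (P : Finset (List V)) : Prop :=
  (∀ p ∈ P, IsPath E s t p) ∧ (P : Set (List V)).Pairwise (IntDisjoint s t)

/-!
If `s` has an outgoing arc then `t` is reachable from `s` in `F`. Otherwise the set `R` of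
vertices reachable from `s` has no arc of `F` leaving it, so its total out-degree is at most its
total in-degree; yet all vertices of `R` but `s` are balanced, and `s` has in-degree `0` and
positive out-degree. An `s`–`t` path in `F` is itself balanced at the inner vertices and uses
exactly one arc out of `s`, so deleting its arcs keeps the hypotheses with `k` lowered by one,
and induction on `#F` supplies the remaining paths, edge-disjoint from the first.
-/

theorem List.count_dropLast_eq_count_tail {α : Type*} [BEq α] [LawfulBEq α] {l : List α} {a : α}
    (hhead : l.head? ≠ some a) (hlast : l.getLast? ≠ some a) :
    l.dropLast.count a = l.tail.count a := by
  rcases eq_or_ne l [] with rfl | hne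
  · rfl
  have hdrop : l.dropLast.count a = l.count a := by
    conv_rhs => rw [← l.dropLast_concat_getLast hne]
    simp_all [List.getLast?_eq_some_getLast hne]
  rw [hdrop, List.count_tail]
  simp_all

open Finset Relation

section

variable {V : Type*}

theorem pathArcs_cons_cons (x y : V) (l : List V) :
    pathArcs (x :: y :: l) = (x, y) :: pathArcs (y :: l) := rfl

theorem isChain_iff_forall_mem_pathArcs {R : V → V → Prop} :
    ∀ {l : List V}, l.IsChain R ↔ ∀ a ∈ pathArcs l, R a.1 a.2
  | [] | [_] => by simp [pathArcs]
  | x :: y :: l => by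
    simp [List.isChain_cons_cons, pathArcs_cons_cons,
      isChain_iff_forall_mem_pathArcs (l := y :: l)]

theorem map_fst_pathArcs : ∀ l : List V, (pathArcs l).map Prod.fst = l.dropLast
  | [] | [_] => rfl
  | x :: y :: l => by
    rw [pathArcs_cons_cons, List.map_cons, map_fst_pathArcs (y :: l)]
    rfl

theorem map_snd_pathArcs (l : List V) : (pathArcs l).map Prod.snd = l.tail :=
  List.map_snd_zip (by simp)

theorem nodup_pathArcs {l : List V} (h : l.Nodup) : (pathArcs l).Nodup :=
  .of_map Prod.snd (by rw [map_snd_pathArcs]; exact h.sublist (List.tail_sublist l))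

namespace IsPath

variable {E F : Finset (V × V)} {s t u v : V} {p : List V}

theorem mono (hFE : F ⊆ E) (hp : IsPath F s t p) : IsPath E s t p :=
  ⟨hp.1, hp.2.1.imp fun _ _ h => hFE h, hp.2.2⟩

theorem mem_of_mem_pathArcs (hp : IsPath F s t p) {a : V × V} (ha : a ∈ pathArcs p) : a ∈ F :=
  isChain_iff_forall_mem_pathArcs.1 hp.2.1 a ha

theorem cons (hp : IsPath F v t p) (huv : (u, v) ∈ F) (hu : u ∉ p) : IsPath F u t (u :: p) := by
  obtain ⟨hnd, hch, hs, ht⟩ := hp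
  cases p with
  | nil => simp at hs
  | cons w p =>
  obtain rfl : w = v := by simpa using hs
  exact ⟨hnd.cons hu, hch.cons_cons huv, rfl, by simpa using ht⟩

theorem exists_isPath_of_mem (hp : IsPath F s t p) (hu : u ∈ p) : ∃ q, IsPath F u t q := by
  obtain ⟨hnd, hch, -, ht⟩ := hp
  obtain ⟨a, b, rfl⟩ := List.append_of_mem hu
  have hsuf : u :: b <:+ a ++ u :: b := List.suffix_append a _
  exact ⟨u :: b, hnd.sublist hsuf.sublist, hch.suffix hsuf, rfl, by simpa using ht⟩

end IsPath

theorem exists_isPath_of_reflTransGen {F : Finset (V × V)} {s t : V}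
    (h : ReflTransGen (fun u v => (u, v) ∈ F) s t) : ∃ p, IsPath F s t p := by
  induction h using ReflTransGen.head_induction_on with
  | refl => exact ⟨[t], List.nodup_singleton t, List.isChain_singleton t, rfl, rfl⟩
  | @head u v huv _ ih =>
    obtain ⟨p, hp⟩ := ih
    by_cases hu : u ∈ p
    exacts [IsPath.exists_isPath_of_mem hp hu, ⟨_, IsPath.cons hp huv hu⟩]

section Degrees

variable [DecidableEq V]

def outDeg (F : Finset (V × V)) (v : V) : ℕ := #{a ∈ F | a.1 = v}

def inDeg (F : Finset (V × V)) (v : V) : ℕ := #{a ∈ F | a.2 = v}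

theorem card_filter_sdiff_add {α : Type*} [DecidableEq α] {F S : Finset α} (h : S ⊆ F)
    (q : α → Prop) [DecidablePred q] : #{a ∈ F \ S | q a} + #{a ∈ S | q a} = #{a ∈ F | q a} := by
  have : {a ∈ F \ S | q a} = {a ∈ F | q a} \ {a ∈ S | q a} := by ext; simp; tauto
  rw [this]
  exact card_sdiff_add_card_eq_card (filter_subset_filter q h)

theorem outDeg_sdiff_add {F S : Finset (V × V)} (h : S ⊆ F) (v : V) :
    outDeg (F \ S) v + outDeg S v = outDeg F v :=
  card_filter_sdiff_add h _

theorem inDeg_sdiff_add {F S : Finset (V × V)} (h : S ⊆ F) (v : V) :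
    inDeg (F \ S) v + inDeg S v = inDeg F v :=
  card_filter_sdiff_add h _

theorem outDeg_toFinset_pathArcs {p : List V} (hp : p.Nodup) (v : V) :
    outDeg (pathArcs p).toFinset v = p.dropLast.count v := by
  rw [outDeg, (nodup_pathArcs hp).card_eq_countP, ← map_fst_pathArcs, List.count, List.countP_map]
  rfl

theorem inDeg_toFinset_pathArcs {p : List V} (hp : p.Nodup) (v : V) :
    inDeg (pathArcs p).toFinset v = p.tail.count v := by
  rw [inDeg, (nodup_pathArcs hp).card_eq_countP, ← map_snd_pathArcs, List.count, List.countP_map]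
  rfl

theorem sum_outDeg_le_sum_inDeg {F : Finset (V × V)} {R : Finset V}
    (hR : ∀ a ∈ F, a.1 ∈ R → a.2 ∈ R) : ∑ v ∈ R, outDeg F v ≤ ∑ v ∈ R, inDeg F v := by
  simp only [outDeg, inDeg, sum_card_fiberwise_eq_card_filter]
  exact card_le_card fun a ha => by
    rw [mem_filter] at ha ⊢
    exact ⟨ha.1, hR a ha.1 ha.2⟩

namespace IsPath

variable {F : Finset (V × V)} {s t v : V} {p : List V}

theorem inDeg_pathArcs_eq_outDeg (hp : IsPath F s t p) (hvs : v ≠ s) (hvt : v ≠ t) :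
    inDeg (pathArcs p).toFinset v = outDeg (pathArcs p).toFinset v := by
  rw [inDeg_toFinset_pathArcs hp.1, outDeg_toFinset_pathArcs hp.1,
    List.count_dropLast_eq_count_tail] <;> simp [hp.2.2.1, hp.2.2.2, hvs.symm, hvt.symm]

theorem outDeg_pathArcs_source (hp : IsPath F s t p) (hst : s ≠ t) :
    outDeg (pathArcs p).toFinset s = 1 := by
  obtain ⟨hnd, -, hs, ht⟩ := hp
  rw [outDeg_toFinset_pathArcs hnd]
  cases p with
  | nil => simp at hs
  | cons x q =>
  obtain rfl : x = s := by simpa using hs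
  have hq : q ≠ [] := by rintro rfl; exact hst (by simpa using ht)
  rw [List.dropLast_cons_of_ne_nil hq, List.count_cons_self,
    List.count_eq_zero_of_not_mem fun h => (List.nodup_cons.1 hnd).1 (List.dropLast_subset q h)]

end IsPath

theorem reflTransGen_of_outDeg_pos {F : Finset (V × V)} {s t : V}
    (hbal : ∀ v, v ≠ s → v ≠ t → inDeg F v = outDeg F v) (hs : ∀ a ∈ F, a.2 ≠ s)
    (hk : 0 < outDeg F s) : ReflTransGen (fun u v => (u, v) ∈ F) s t := by
  classical
  by_contra hst
  set R : Finset V := {v ∈ insert s (F.image Prod.snd) | ReflTransGen (fun u v => (u, v) ∈ F) s v}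
  have hclosed : ∀ a ∈ F, a.1 ∈ R → a.2 ∈ R := fun a ha h1 => by
    simp only [R, mem_filter] at h1 ⊢
    exact ⟨mem_insert_of_mem (mem_image_of_mem _ ha), h1.2.tail ha⟩
  have hin_s : inDeg F s = 0 := card_eq_zero.2 (filter_eq_empty_iff.2 hs)
  have hlt : ∑ v ∈ R, inDeg F v < ∑ v ∈ R, outDeg F v := by
    refine sum_lt_sum (fun v hv => ?_) ⟨s, mem_filter.2 ⟨mem_insert_self _ _, .refl⟩, hin_s ▸ hk⟩
    rcases eq_or_ne v s with rfl | hvs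
    · exact hin_s ▸ Nat.zero_le _
    · have hvt : v ≠ t := by rintro rfl; exact hst (mem_filter.1 hv).2
      exact (hbal v hvs hvt).le
  exact (sum_outDeg_le_sum_inDeg hclosed).not_gt hlt

end Degrees

instance : Std.Symm (EdgeDisjoint (V := V)) :=
  ⟨fun _ _ h a haq hap => h a hap haq⟩

theorem exists_pairwise_edgeDisjoint_isPath [DecidableEq V] {s t : V} (hst : s ≠ t)
    (F : Finset (V × V)) (hbal : ∀ v, v ≠ s → v ≠ t → inDeg F v = outDeg F v)
    (hs : ∀ a ∈ F, a.2 ≠ s) :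
    ∃ P : Finset (List V), #P = outDeg F s ∧ (∀ p ∈ P, IsPath F s t p) ∧
      (P : Set (List V)).Pairwise EdgeDisjoint := by
  induction F using Finset.strongInduction with
  | H F ih =>
  rcases (outDeg F s).eq_zero_or_pos with hk | hk
  · exact ⟨∅, hk.symm ▸ card_empty, by simp, by simp⟩
  obtain ⟨p, hp⟩ := exists_isPath_of_reflTransGen (reflTransGen_of_outDeg_pos hbal hs hk)
  let S := (pathArcs p).toFinset
  have hSF : S ⊆ F := fun a ha => hp.mem_of_mem_pathArcs (List.mem_toFinset.1 ha)
  have hS : outDeg S s = 1 := hp.outDeg_pathArcs_source hst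
  have hSne : S.Nonempty := card_pos.1 <| calc
    0 < outDeg S s := hS ▸ one_pos
    _ ≤ #S := card_filter_le S _
  obtain ⟨P, hPcard, hPpath, hPdisj⟩ := ih (F \ S) (sdiff_ssubset hSF hSne)
    (fun v hvs hvt => by
      have : inDeg S v = outDeg S v := hp.inDeg_pathArcs_eq_outDeg hvs hvt
      have := hbal v hvs hvt
      have := inDeg_sdiff_add hSF v
      have := outDeg_sdiff_add hSF v
      omega)
    (fun a ha => hs a (mem_sdiff.1 ha).1)
  have hPS : ∀ q ∈ P, ∀ a ∈ pathArcs q, a ∉ S := fun q hq a ha =>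
    (mem_sdiff.1 ((hPpath q hq).mem_of_mem_pathArcs ha)).2
  have hpP : p ∉ P := fun h => by
    obtain ⟨a, ha⟩ := hSne
    exact hPS p h a (List.mem_toFinset.1 ha) ha
  refine ⟨insert p P, ?_, ?_, ?_⟩
  · rw [card_insert_of_notMem hpP, hPcard, ← hS, outDeg_sdiff_add hSF]
  · exact forall_mem_insert _ _ _ |>.2 ⟨hp, fun q hq => (hPpath q hq).mono sdiff_subset⟩
  · rw [coe_insert, Set.pairwise_insert_of_symm]
    exact ⟨hPdisj, fun q hq _ a hap haq => hPS q hq a haq (List.mem_toFinset.2 hap)⟩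

end

theorem flow_decomposes_into_paths_general {V : Type*} [DecidableEq V]
    (E F : Finset (V × V)) (s t : V) (hst : s ≠ t) (hFE : F ⊆ E)
    (hcons : ∀ v : V, v ≠ s → v ≠ t →
      (F.filter (fun a => a.2 = v)).card = (F.filter (fun a => a.1 = v)).card)
    (hs : ∀ a ∈ F, a.2 ≠ s) :
    ∃ P : Finset (List V), P.card = (F.filter (fun a => a.1 = s)).card ∧
      (∀ p ∈ P, IsPath E s t p ∧ ∀ a ∈ pathArcs p, a ∈ F) ∧
      (P : Set (List V)).Pairwise EdgeDisjoint := by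
  obtain ⟨P, hcard, hpaths, hdisj⟩ := exists_pairwise_edgeDisjoint_isPath hst F hcons hs
  exact ⟨P, hcard, fun p hp => ⟨(hpaths p hp).mono hFE,
    fun _ => (hpaths p hp).mem_of_mem_pathArcs⟩, hdisj⟩

/-- **Flow decomposition.** If `F ⊆ E` is a set of arcs in which every vertex other than
`s` and `t` has equally many incoming and outgoing arcs, `s` has no incoming arcs and `t`
has no outgoing arcs, and `k` is the number of arcs of `F` leaving `s`, then there exist
`k` pairwise edge-disjoint directed `s`–`t` paths all of whose arcs belong to `F`. -/
theorem flow_decomposes_into_paths {V : Type*} [Fintype V] [DecidableEq V]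
    (E F : Finset (V × V)) (s t : V) (hst : s ≠ t) (hFE : F ⊆ E)
    (hcons : ∀ v : V, v ≠ s → v ≠ t →
      (F.filter (fun a => a.2 = v)).card = (F.filter (fun a => a.1 = v)).card)
    (hs : ∀ a ∈ F, a.2 ≠ s) (ht : ∀ a ∈ F, a.1 ≠ t) :
    ∃ P : Finset (List V), P.card = (F.filter (fun a => a.1 = s)).card ∧
      (∀ p ∈ P, IsPath E s t p ∧ ∀ a ∈ pathArcs p, a ∈ F) ∧
      (P : Set (List V)).Pairwise EdgeDisjoint :=
  flow_decomposes_into_paths_general E F s t hst hFE hcons hs
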